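/- Assume ‖H‖_{2,col} ≤ B, |y| ≤ B, that f and h satisfy (G1) and (G3), and that the parameters satisfy (1/(ML))∑_{l,j}(‖θ_{l,j}‖²+‖w_{l,j}‖²) ≤ A². For a grid point t_l, define the discrete adjoint vector p̂_Θ(H,t_l) ∈ ℝ^{D×(N+1)} by vec(p̂_Θ(H,t_l))ᵀ = (Read[T̂_Θ(H,1)] − y)·e_{i₀}ᵀ·A_{L−1,h}A_{L−1,f}⋯A_{l,h}A_{l,f}, where A_{m,f} = I + (Δt/2)M^{−1}∑_{j=1}^{M}∇_{vec(T)}vec(f(T̂_Θ(H,t_m),θ_{m,j})), A_{m,h} = I + (Δt/2)M^{−1}∑_{j=1}^{M}∇_{vec(T)}vec(h(T̂_Θ(H,t_m+Δt/2),w_{m,j})), and e_{i₀} is the standard basis vector selecting the read-out coordinate of vec. Then, with B_T = B·exp(K(1+A+A²)): ‖p̂_Θ(H,t_l)‖_F ≤ (B + B_T)·exp(φ_T(√(N+1)·B_T)·(1+A+A²)) for every l ∈ {0,…,L−1}. -/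

import Mathlib

open MeasureTheory Set

noncomputable section

/-- `D × (N+1)` real matrices, with the Frobenius (Euclidean) norm. -/
abbrev Mat (D N : ℕ) : Type := EuclideanSpace ℝ (Fin D × Fin (N + 1))

/-- Parameter space `ℝ^p` with the Euclidean norm. -/
abbrev Par (p : ℕ) : Type := EuclideanSpace ℝ (Fin p)

/-- The `j`-th column of a matrix, as a Euclidean vector. -/
noncomputable def matCol {D N : ℕ} (Z : Mat D N) (j : Fin (N + 1)) :
    EuclideanSpace ℝ (Fin D) :=
  (WithLp.equiv 2 (Fin D → ℝ)).symm fun i => Z (i, j)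

/-- Maximum ℓ²-norm of a column: `‖Z‖_{2,col}`. -/
noncomputable def colNorm {D N : ℕ} (Z : Mat D N) : ℝ :=
  ⨆ j : Fin (N + 1), ‖matCol Z j‖

/-- The discrete Transformer: `T̂(t_{l+1})` is obtained from `T̂(t_l)` by one self-attention
half-step with encoder `f` followed by one feed-forward half-step with encoder `h`,
with step size `Δt/2 = 1/(2L)` and `M` heads. -/
noncomputable def Tdis {D N q : ℕ} (f h : Mat D N → Par q → Mat D N) (L M : ℕ)
    (θ w : ℕ → Fin M → Par q) (H : Mat D N) : ℕ → Mat D N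
  | 0 => H
  | l + 1 =>
    let T := Tdis f h L M θ w H l
    let T' := T + (2 * (L : ℝ) * (M : ℝ))⁻¹ • ∑ j : Fin M, f T (θ l j)
    T' + (2 * (L : ℝ) * (M : ℝ))⁻¹ • ∑ j : Fin M, h T' (w l j)

/-- The discrete Transformer at the half grid point `t_l + Δt/2`. -/
noncomputable def TdisHalf {D N q : ℕ} (f h : Mat D N → Par q → Mat D N) (L M : ℕ)
    (θ w : ℕ → Fin M → Par q) (H : Mat D N) (l : ℕ) : Mat D N :=
  Tdis f h L M θ w H l +
    (2 * (L : ℝ) * (M : ℝ))⁻¹ • ∑ j : Fin M, f (Tdis f h L M θ w H l) (θ l j)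

/-- The Jacobian factor of the self-attention half-step at layer `l`. -/
noncomputable def AfOp {D N q : ℕ} (f h : Mat D N → Par q → Mat D N) (L M : ℕ)
    (θ w : ℕ → Fin M → Par q) (H : Mat D N) (l : ℕ) : Mat D N →L[ℝ] Mat D N :=
  1 + (2 * (L : ℝ) * (M : ℝ))⁻¹ •
    ∑ j : Fin M, fderiv ℝ (fun T => f T (θ l j)) (Tdis f h L M θ w H l)

/-- The Jacobian factor of the feed-forward half-step at layer `l`. -/
noncomputable def AhOp {D N q : ℕ} (f h : Mat D N → Par q → Mat D N) (L M : ℕ)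
    (θ w : ℕ → Fin M → Par q) (H : Mat D N) (l : ℕ) : Mat D N →L[ℝ] Mat D N :=
  1 + (2 * (L : ℝ) * (M : ℝ))⁻¹ •
    ∑ j : Fin M, fderiv ℝ (fun T => h T (w l j)) (TdisHalf f h L M θ w H l)

/-- The ordered backward product `A_{L-1,h} A_{L-1,f} ⋯ A_{l,h} A_{l,f}`. -/
noncomputable def backProd {D N q : ℕ} (f h : Mat D N → Par q → Mat D N) (L M : ℕ)
    (θ w : ℕ → Fin M → Par q) (H : Mat D N) (l : ℕ) : Mat D N →L[ℝ] Mat D N :=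
  (List.ofFn fun m : Fin (L - l) =>
    AhOp f h L M θ w H (L - 1 - (m : ℕ)) * AfOp f h L M θ w H (L - 1 - (m : ℕ))).prod

/-- The discrete adjoint vector `p̂_Θ(H, t_l)`, whose (row) vectorization is
`(Read[T̂(1)] - y) · e_{i₀}ᵀ · A_{L-1,h} A_{L-1,f} ⋯ A_{l,h} A_{l,f}`. -/
noncomputable def phat {D N q : ℕ} (f h : Mat D N → Par q → Mat D N) (i₀ : Fin D) (yv : ℝ)
    (L M : ℕ) (θ w : ℕ → Fin M → Par q) (H : Mat D N) (l : ℕ) : Mat D N :=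
  (Tdis f h L M θ w H L (i₀, Fin.last N) - yv) •
    ContinuousLinearMap.adjoint (backProd f h L M θ w H l)
      (EuclideanSpace.single (i₀, Fin.last N) (1 : ℝ))

/-! By (G1) each half-step multiplies `‖·‖_{2,col}` by at most `1 + x ≤ eˣ`, where
`x = K · Δt/(2M) · ∑ⱼ (1 + ‖β‖ + ‖β‖²)`. By Cauchy–Schwarz these exponents add up over all layers
to at most `K (1 + A + A²)`, so every forward state has column norm at most `B_T` and hence
Frobenius norm at most `√(N+1) B_T`. Then (G3) bounds the Jacobian factors `A_{m,f}`, `A_{m,h}` in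
the same way, with `φ_T(√(N+1) B_T)` in place of `K`; the transpose does not change the operator
norm, and the read-out residual is at most `B_T + B`. -/

open Real

section ColNorm

variable {D N : ℕ}

lemma norm_matCol_le_colNorm (Z : Mat D N) (j : Fin (N + 1)) : ‖matCol Z j‖ ≤ colNorm Z :=
  le_ciSup (f := fun j => ‖matCol Z j‖) (Set.finite_range _).bddAbove j

lemma colNorm_nonneg (Z : Mat D N) : 0 ≤ colNorm Z :=
  (norm_nonneg _).trans (norm_matCol_le_colNorm Z 0)

lemma colNorm_le_of_forall {c : ℝ} {Z : Mat D N} (h : ∀ j, ‖matCol Z j‖ ≤ c) :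
    colNorm Z ≤ c :=
  ciSup_le h

lemma colNorm_zero : colNorm (0 : Mat D N) = 0 :=
  le_antisymm (colNorm_le_of_forall fun _ => (norm_zero (E := EuclideanSpace ℝ (Fin D))).le)
    (colNorm_nonneg 0)

lemma colNorm_add_le (Y Z : Mat D N) : colNorm (Y + Z) ≤ colNorm Y + colNorm Z :=
  colNorm_le_of_forall fun j =>
    (norm_add_le (matCol Y j) (matCol Z j)).trans
      (add_le_add (norm_matCol_le_colNorm Y j) (norm_matCol_le_colNorm Z j))

lemma colNorm_smul (c : ℝ) (Z : Mat D N) : colNorm (c • Z) = |c| * colNorm Z := by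
  simp only [colNorm, show ∀ j, matCol (c • Z) j = c • matCol Z j from fun _ => rfl, norm_smul,
    Real.norm_eq_abs]
  exact (Real.mul_iSup_of_nonneg (abs_nonneg c) _).symm

lemma colNorm_sum_le {ι : Type*} (s : Finset ι) (g : ι → Mat D N) :
    colNorm (∑ i ∈ s, g i) ≤ ∑ i ∈ s, colNorm (g i) :=
  Finset.le_sum_of_subadditive colNorm colNorm_zero.le colNorm_add_le s g

lemma abs_apply_le_colNorm (Z : Mat D N) (i : Fin D) (j : Fin (N + 1)) :
    |Z (i, j)| ≤ colNorm Z :=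
  (PiLp.norm_apply_le (matCol Z j) i).trans (norm_matCol_le_colNorm Z j)

lemma norm_le_sqrt_mul_colNorm (Z : Mat D N) : ‖Z‖ ≤ √((N : ℝ) + 1) * colNorm Z := by
  have hsq : ‖Z‖ ^ 2 = ∑ j : Fin (N + 1), ‖matCol Z j‖ ^ 2 := by
    rw [PiLp.norm_sq_eq_of_L2, Fintype.sum_prod_type_right]
    exact Finset.sum_congr rfl fun j _ => (PiLp.norm_sq_eq_of_L2 _ (matCol Z j)).symm
  refine (pow_le_pow_iff_left₀ (norm_nonneg Z) (by positivity [colNorm_nonneg Z])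
    two_ne_zero).1 ?_
  calc ‖Z‖ ^ 2 ≤ ∑ _j : Fin (N + 1), colNorm Z ^ 2 := hsq ▸ Finset.sum_le_sum fun j _ =>
          pow_le_pow_left₀ (norm_nonneg _) (norm_matCol_le_colNorm Z j) 2
    _ = (√((N : ℝ) + 1) * colNorm Z) ^ 2 := by
          rw [mul_pow, sq_sqrt (by positivity)]
          simp

lemma colNorm_add_smul_sum_le_mul_exp {M : ℕ} {K c : ℝ} (hc : 0 ≤ c) (T : Mat D N)
    (g : Fin M → Mat D N) (u : Fin M → ℝ) (hg : ∀ j, colNorm (g j) ≤ K * colNorm T * u j) :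
    colNorm (T + c • ∑ j, g j) ≤ colNorm T * exp (K * (c * ∑ j, u j)) :=
  calc colNorm (T + c • ∑ j, g j) ≤ colNorm T + c * ∑ j, K * colNorm T * u j := by
        refine (colNorm_add_le _ _).trans (add_le_add_right ?_ _)
        rw [colNorm_smul, abs_of_nonneg hc]
        exact mul_le_mul_of_nonneg_left
          ((colNorm_sum_le _ _).trans (Finset.sum_le_sum fun j _ => hg j)) hc
    _ = colNorm T * (K * (c * ∑ j, u j) + 1) := by
        rw [← Finset.mul_sum]
        ring
    _ ≤ colNorm T * exp (K * (c * ∑ j, u j)) :=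
        mul_le_mul_of_nonneg_left (add_one_le_exp _) (colNorm_nonneg T)

end ColNorm

lemma norm_one_add_smul_sum_le_exp {E : Type*} [NormedAddCommGroup E] [NormedSpace ℝ E]
    {M : ℕ} {c : ℝ} (hc : 0 ≤ c) (J : Fin M → E →L[ℝ] E) (b : Fin M → ℝ)
    (hJ : ∀ j, ‖J j‖ ≤ b j) :
    ‖1 + c • ∑ j, J j‖ ≤ exp (c * ∑ j, b j) :=
  calc ‖1 + c • ∑ j, J j‖ ≤ 1 + c * ∑ j, b j := by
        refine (norm_add_le _ _).trans (add_le_add ContinuousLinearMap.norm_id_le ?_)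
        rw [norm_smul, Real.norm_of_nonneg hc]
        exact mul_le_mul_of_nonneg_left
          ((norm_sum_le _ _).trans (Finset.sum_le_sum fun j _ => hJ j)) hc
    _ ≤ exp (c * ∑ j, b j) := by linarith [add_one_le_exp (c * ∑ j, b j)]

lemma norm_prod_ofFn_le_exp_sum {R : Type*} [SeminormedRing R] (h1 : ‖(1 : R)‖ ≤ 1) :
    ∀ {n : ℕ} (g : Fin n → R) (t : Fin n → ℝ), (∀ m, ‖g m‖ ≤ exp (t m)) →
      ‖(List.ofFn g).prod‖ ≤ exp (∑ m, t m)
  | 0, _, _, _ => by simpa using h1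
  | n + 1, g, t, hg => by
    rw [List.ofFn_succ, List.prod_cons, Fin.sum_univ_succ, exp_add]
    exact (norm_mul_le _ _).trans (mul_le_mul (hg 0)
      (norm_prod_ofFn_le_exp_sum h1 _ _ fun m => hg m.succ) (norm_nonneg _) (exp_nonneg _))

lemma sum_one_add_add_sq_le {ι : Type*} (s : Finset ι) {x : ι → ℝ} (hx : ∀ i ∈ s, 0 ≤ x i)
    {A : ℝ} (hA : 0 ≤ A) (h : ∑ i ∈ s, x i ^ 2 ≤ s.card * A ^ 2) :
    ∑ i ∈ s, (1 + x i + x i ^ 2) ≤ s.card * (1 + A + A ^ 2) := by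
  have hlin : ∑ i ∈ s, x i ≤ s.card * A := by
    refine (pow_le_pow_iff_left₀ (Finset.sum_nonneg hx) (by positivity) two_ne_zero).1 ?_
    calc (∑ i ∈ s, x i) ^ 2 ≤ s.card * ∑ i ∈ s, x i ^ 2 := sq_sum_le_card_mul_sum_sq
      _ ≤ s.card * (s.card * A ^ 2) := mul_le_mul_of_nonneg_left h (Nat.cast_nonneg _)
      _ = (s.card * A) ^ 2 := by ring
  rw [Finset.sum_add_distrib, Finset.sum_add_distrib, Finset.sum_const, nsmul_one]
  linarith

def paramWeight {q : ℕ} (β : Par q) : ℝ := 1 + ‖β‖ + ‖β‖ ^ 2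

lemma paramWeight_nonneg {q : ℕ} (β : Par q) : 0 ≤ paramWeight β := by
  unfold paramWeight
  positivity

def layerWeight {q M : ℕ} (θ w : ℕ → Fin M → Par q) (m : ℕ) : ℝ :=
  ∑ j, (paramWeight (θ m j) + paramWeight (w m j))

def cumWeight {q M : ℕ} (θ w : ℕ → Fin M → Par q) (n : ℕ) : ℝ :=
  ∑ m ∈ Finset.range n, layerWeight θ w m

/-- The factor `Δt/2 · M⁻¹` of every half-step. -/
def halfStep (L M : ℕ) : ℝ := (2 * (L : ℝ) * (M : ℝ))⁻¹

lemma halfStep_nonneg (L M : ℕ) : 0 ≤ halfStep L M := by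
  unfold halfStep
  positivity

section Weights

variable {q M : ℕ} (θ w : ℕ → Fin M → Par q)

lemma layerWeight_nonneg (m : ℕ) : 0 ≤ layerWeight θ w m :=
  Finset.sum_nonneg fun _ _ => add_nonneg (paramWeight_nonneg _) (paramWeight_nonneg _)

lemma cumWeight_mono : Monotone (cumWeight θ w) := fun _ _ hab =>
  Finset.sum_le_sum_of_subset_of_nonneg (Finset.range_subset_range.2 hab)
    fun m _ _ => layerWeight_nonneg θ w m

lemma cumWeight_succ (n : ℕ) :
    cumWeight θ w (n + 1) =
      cumWeight θ w n + ∑ j, paramWeight (θ n j) + ∑ j, paramWeight (w n j) := by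
  rw [cumWeight, Finset.sum_range_succ, layerWeight, Finset.sum_add_distrib, add_assoc]
  rfl

lemma halfStep_mul_cumWeight_le {L : ℕ} {A : ℝ} (hA : 0 ≤ A)
    (hparam : (1 / ((M : ℝ) * L)) *
        ∑ l ∈ Finset.range L, ∑ j : Fin M, (‖θ l j‖ ^ 2 + ‖w l j‖ ^ 2) ≤ A ^ 2) :
    halfStep L M * cumWeight θ w L ≤ 1 + A + A ^ 2 := by
  rcases (Nat.zero_le (L * M)).eq_or_lt with hLM | hLM
  · have : halfStep L M = 0 := by simp [halfStep, mul_assoc, ← Nat.cast_mul, ← hLM]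
    rw [this, zero_mul]
    positivity
  set s := Finset.range L ×ˢ (Finset.univ : Finset (Fin M))
  have hcard : (s.card : ℝ) = L * M := by simp [s]
  have hLM' : (0 : ℝ) < L * M := by exact_mod_cast hLM
  have hsq : ∑ p ∈ s, ‖θ p.1 p.2‖ ^ 2 + ∑ p ∈ s, ‖w p.1 p.2‖ ^ 2 ≤ s.card * A ^ 2 := by
    rw [← Finset.sum_add_distrib, Finset.sum_product, hcard]
    rw [one_div, mul_comm (M : ℝ), inv_mul_le_iff₀ hLM'] at hparam
    exact hparam
  have hθ := sum_one_add_add_sq_le s (fun _ _ => norm_nonneg _) hA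
    (le_of_add_le_of_nonneg_left hsq (Finset.sum_nonneg fun _ _ => by positivity))
  have hw := sum_one_add_add_sq_le s (fun _ _ => norm_nonneg _) hA
    (le_of_add_le_of_nonneg_right hsq (Finset.sum_nonneg fun _ _ => by positivity))
  have hcum : cumWeight θ w L = ∑ p ∈ s, (1 + ‖θ p.1 p.2‖ + ‖θ p.1 p.2‖ ^ 2) +
      ∑ p ∈ s, (1 + ‖w p.1 p.2‖ + ‖w p.1 p.2‖ ^ 2) := by
    rw [← Finset.sum_add_distrib, Finset.sum_product]
    rfl
  rw [hcum, halfStep, mul_assoc, inv_mul_le_iff₀ (by positivity)]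
  rw [hcard] at hθ hw
  linarith

end Weights

section Transformer

variable {D N q : ℕ} (f h : Mat D N → Par q → Mat D N) (L M : ℕ) (θ w : ℕ → Fin M → Par q)
  (H : Mat D N) {K : ℝ}

lemma colNorm_TdisHalf_le
    (hG1f : ∀ (T : Mat D N) (θ : Par q), colNorm (f T θ) ≤ K * colNorm T * paramWeight θ)
    (n : ℕ) :
    colNorm (TdisHalf f h L M θ w H n) ≤
      colNorm (Tdis f h L M θ w H n) * exp (K * (halfStep L M * ∑ j, paramWeight (θ n j))) :=
  colNorm_add_smul_sum_le_mul_exp (halfStep_nonneg L M) _ _ _ fun _ => hG1f _ _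

lemma colNorm_Tdis_succ_le
    (hG1h : ∀ (T : Mat D N) (w : Par q), colNorm (h T w) ≤ K * colNorm T * paramWeight w)
    (n : ℕ) :
    colNorm (Tdis f h L M θ w H (n + 1)) ≤
      colNorm (TdisHalf f h L M θ w H n) * exp (K * (halfStep L M * ∑ j, paramWeight (w n j))) :=
  colNorm_add_smul_sum_le_mul_exp (halfStep_nonneg L M) _ _ _ fun _ => hG1h _ _

lemma colNorm_Tdis_le
    (hG1f : ∀ (T : Mat D N) (θ : Par q), colNorm (f T θ) ≤ K * colNorm T * paramWeight θ)
    (hG1h : ∀ (T : Mat D N) (w : Par q), colNorm (h T w) ≤ K * colNorm T * paramWeight w) :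
    ∀ n, colNorm (Tdis f h L M θ w H n) ≤
      colNorm H * exp (K * (halfStep L M * cumWeight θ w n))
  | 0 => by simp [Tdis, cumWeight]
  | n + 1 => by
    calc colNorm (Tdis f h L M θ w H (n + 1))
        ≤ colNorm (Tdis f h L M θ w H n) * exp (K * (halfStep L M * ∑ j, paramWeight (θ n j))) *
            exp (K * (halfStep L M * ∑ j, paramWeight (w n j))) :=
          (colNorm_Tdis_succ_le f h L M θ w H hG1h n).trans <| mul_le_mul_of_nonneg_right
            (colNorm_TdisHalf_le f h L M θ w H hG1f n) (exp_nonneg _)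
      _ ≤ colNorm H * exp (K * (halfStep L M * cumWeight θ w n)) *
            exp (K * (halfStep L M * ∑ j, paramWeight (θ n j))) *
            exp (K * (halfStep L M * ∑ j, paramWeight (w n j))) := by
          gcongr
          exact colNorm_Tdis_le hG1f hG1h n
      _ = colNorm H * exp (K * (halfStep L M * cumWeight θ w (n + 1))) := by
          rw [mul_assoc, mul_assoc, ← exp_add, ← exp_add, cumWeight_succ]
          ring_nf

lemma colNorm_TdisHalf_le_cumWeight (hK : 0 ≤ K)
    (hG1f : ∀ (T : Mat D N) (θ : Par q), colNorm (f T θ) ≤ K * colNorm T * paramWeight θ)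
    (hG1h : ∀ (T : Mat D N) (w : Par q), colNorm (h T w) ≤ K * colNorm T * paramWeight w)
    (n : ℕ) :
    colNorm (TdisHalf f h L M θ w H n) ≤
      colNorm H * exp (K * (halfStep L M * cumWeight θ w (n + 1))) :=
  calc colNorm (TdisHalf f h L M θ w H n)
      ≤ colNorm H * exp (K * (halfStep L M * cumWeight θ w n)) *
          exp (K * (halfStep L M * ∑ j, paramWeight (θ n j))) :=
        (colNorm_TdisHalf_le f h L M θ w H hG1f n).trans <| mul_le_mul_of_nonneg_right
          (colNorm_Tdis_le f h L M θ w H hG1f hG1h n) (exp_nonneg _)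
    _ ≤ colNorm H * exp (K * (halfStep L M * cumWeight θ w (n + 1))) := by
        have hcum : cumWeight θ w n + ∑ j, paramWeight (θ n j) ≤ cumWeight θ w (n + 1) := by
          rw [cumWeight_succ]
          exact le_add_of_nonneg_right (Finset.sum_nonneg fun _ _ => paramWeight_nonneg _)
        rw [mul_assoc, ← exp_add, ← mul_add, ← mul_add]
        have hH0 := colNorm_nonneg H
        have hc := halfStep_nonneg L M
        gcongr

lemma colNorm_mul_exp_cumWeight_le (hK : 0 ≤ K) {B W : ℝ} (hH : colNorm H ≤ B)
    (hW : halfStep L M * cumWeight θ w L ≤ W) {n : ℕ} (hn : n ≤ L) :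
    colNorm H * exp (K * (halfStep L M * cumWeight θ w n)) ≤ B * exp (K * W) := by
  have hB : 0 ≤ B := (colNorm_nonneg H).trans hH
  gcongr
  exact (mul_le_mul_of_nonneg_left (cumWeight_mono θ w hn) (halfStep_nonneg L M)).trans hW

variable {φ : ℝ → ℝ} {R : ℝ}

lemma nonneg_of_norm_fderiv_le (hφ : Monotone φ)
    (hG3f : ∀ (T : Mat D N) (θ : Par q),
      ‖fderiv ℝ (fun T' => f T' θ) T‖ ≤ φ ‖T‖ * paramWeight θ)
    {r : ℝ} (hr : 0 ≤ r) : 0 ≤ φ r :=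
  calc 0 ≤ φ ‖(0 : Mat D N)‖ := by simpa [paramWeight] using (norm_nonneg _).trans (hG3f 0 0)
    _ ≤ φ r := hφ (by simpa using hr)

lemma monotone_apply_norm_le_of_colNorm_le (hφ : Monotone φ) {T : Mat D N}
    (hT : colNorm T ≤ R) : φ ‖T‖ ≤ φ (√((N : ℝ) + 1) * R) :=
  hφ <| (norm_le_sqrt_mul_colNorm T).trans <| mul_le_mul_of_nonneg_left hT (sqrt_nonneg _)

lemma norm_AfOp_le (hφ : Monotone φ)
    (hG3f : ∀ (T : Mat D N) (θ : Par q),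
      ‖fderiv ℝ (fun T' => f T' θ) T‖ ≤ φ ‖T‖ * paramWeight θ)
    {m : ℕ} (hT : colNorm (Tdis f h L M θ w H m) ≤ R) :
    ‖AfOp f h L M θ w H m‖ ≤
      exp (halfStep L M * ∑ j, φ (√((N : ℝ) + 1) * R) * paramWeight (θ m j)) :=
  norm_one_add_smul_sum_le_exp (halfStep_nonneg L M) _ _ fun _ => (hG3f _ _).trans <|
    mul_le_mul_of_nonneg_right (monotone_apply_norm_le_of_colNorm_le hφ hT) (paramWeight_nonneg _)

lemma norm_AhOp_le (hφ : Monotone φ)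
    (hG3h : ∀ (T : Mat D N) (w : Par q),
      ‖fderiv ℝ (fun T' => h T' w) T‖ ≤ φ ‖T‖ * paramWeight w)
    {m : ℕ} (hT : colNorm (TdisHalf f h L M θ w H m) ≤ R) :
    ‖AhOp f h L M θ w H m‖ ≤
      exp (halfStep L M * ∑ j, φ (√((N : ℝ) + 1) * R) * paramWeight (w m j)) :=
  norm_one_add_smul_sum_le_exp (halfStep_nonneg L M) _ _ fun _ => (hG3h _ _).trans <|
    mul_le_mul_of_nonneg_right (monotone_apply_norm_le_of_colNorm_le hφ hT) (paramWeight_nonneg _)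

lemma norm_AhOp_mul_AfOp_le (hφ : Monotone φ)
    (hG3f : ∀ (T : Mat D N) (θ : Par q),
      ‖fderiv ℝ (fun T' => f T' θ) T‖ ≤ φ ‖T‖ * paramWeight θ)
    (hG3h : ∀ (T : Mat D N) (w : Par q),
      ‖fderiv ℝ (fun T' => h T' w) T‖ ≤ φ ‖T‖ * paramWeight w)
    {m : ℕ} (hT : colNorm (Tdis f h L M θ w H m) ≤ R)
    (hT' : colNorm (TdisHalf f h L M θ w H m) ≤ R) :
    ‖AhOp f h L M θ w H m * AfOp f h L M θ w H m‖ ≤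
      exp (φ (√((N : ℝ) + 1) * R) * (halfStep L M * layerWeight θ w m)) := by
  refine (norm_mul_le _ _).trans <| (mul_le_mul (norm_AhOp_le f h L M θ w H hφ hG3h hT')
    (norm_AfOp_le f h L M θ w H hφ hG3f hT) (norm_nonneg _) (exp_nonneg _)).trans_eq ?_
  rw [← exp_add, layerWeight, Finset.sum_add_distrib, ← Finset.mul_sum, ← Finset.mul_sum]
  ring_nf

lemma norm_backProd_le {b : ℕ → ℝ} (hb : ∀ m, 0 ≤ b m)
    (hlayer : ∀ m < L, ‖AhOp f h L M θ w H m * AfOp f h L M θ w H m‖ ≤ exp (b m)) (l : ℕ) :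
    ‖backProd f h L M θ w H l‖ ≤ exp (∑ m ∈ Finset.range L, b m) := by
  -- the factors of `backProd l` are the layers `L - 1, …, l`, among the layers `range L`
  refine (norm_prod_ofFn_le_exp_sum ContinuousLinearMap.norm_id_le _ (fun m => b (L - 1 - m))
    fun m => hlayer _ (by omega)).trans (exp_le_exp.2 ?_)
  rw [Fin.sum_univ_eq_sum_range (fun m => b (L - 1 - m)), ← Finset.sum_range_reflect b L]
  exact Finset.sum_le_sum_of_subset_of_nonneg (Finset.range_subset_range.2 (Nat.sub_le L l))
    fun m _ _ => hb _

lemma norm_phat_le (i₀ : Fin D) (yv : ℝ) (l : ℕ) :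
    ‖phat f h i₀ yv L M θ w H l‖ ≤
      |Tdis f h L M θ w H L (i₀, Fin.last N) - yv| * ‖backProd f h L M θ w H l‖ := by
  rw [phat, norm_smul, Real.norm_eq_abs]
  gcongr
  refine ((backProd f h L M θ w H l).adjoint.le_opNorm _).trans_eq ?_
  rw [ContinuousLinearMap.adjoint.norm_map, PiLp.norm_single, norm_one, mul_one]

end Transformer

theorem stmt11_general (D N q : ℕ) (i₀ : Fin D) (f h : Mat D N → Par q → Mat D N)
    (B K A yv : ℝ) (φT : ℝ → ℝ)
    (hK : 0 < K) (hA : 0 ≤ A)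
    (hφT : Continuous φT ∧ Monotone φT)
    (hG1f : ∀ (T : Mat D N) (θ : Par q),
      colNorm (f T θ) ≤ K * colNorm T * (1 + ‖θ‖ + ‖θ‖ ^ 2))
    (hG3f : ∀ (T : Mat D N) (θ : Par q),
      ‖fderiv ℝ (fun T' => f T' θ) T‖ ≤ φT ‖T‖ * (1 + ‖θ‖ + ‖θ‖ ^ 2))
    (hG1h : ∀ (T : Mat D N) (w : Par q),
      colNorm (h T w) ≤ K * colNorm T * (1 + ‖w‖ + ‖w‖ ^ 2))
    (hG3h : ∀ (T : Mat D N) (w : Par q),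
      ‖fderiv ℝ (fun T' => h T' w) T‖ ≤ φT ‖T‖ * (1 + ‖w‖ + ‖w‖ ^ 2))
    (L M : ℕ)
    (θ w : ℕ → Fin M → Par q)
    (hparam : (1 / ((M : ℝ) * L)) *
        ∑ l ∈ Finset.range L, ∑ j : Fin M, (‖θ l j‖ ^ 2 + ‖w l j‖ ^ 2) ≤ A ^ 2)
    (H : Mat D N) (hH : colNorm H ≤ B) (hy : |yv| ≤ B) :
    ∀ l < L,
      ‖phat f h i₀ yv L M θ w H l‖ ≤
        (B + B * Real.exp (K * (1 + A + A ^ 2))) *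
          Real.exp (φT (Real.sqrt ((N : ℝ) + 1) * (B * Real.exp (K * (1 + A + A ^ 2)))) *
            (1 + A + A ^ 2)) := by
  intro l _
  set W := 1 + A + A ^ 2
  set BT := B * exp (K * W)
  set c := halfStep L M
  have hcW : c * cumWeight θ w L ≤ W := halfStep_mul_cumWeight_le θ w hA hparam
  have hBT {n : ℕ} (hn : n ≤ L) : colNorm H * exp (K * (c * cumWeight θ w n)) ≤ BT :=
    colNorm_mul_exp_cumWeight_le L M θ w H hK.le hH hcW hn
  set φ := φT (√((N : ℝ) + 1) * BT)
  have hφ : 0 ≤ φ := nonneg_of_norm_fderiv_le f hφT.2 hG3f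
    (by positivity [(colNorm_nonneg H).trans hH])
  have hback : ‖backProd f h L M θ w H l‖ ≤ exp (φ * W) := by
    refine (norm_backProd_le f h L M θ w H (b := fun m => φ * (c * layerWeight θ w m))
      (fun m => mul_nonneg hφ (mul_nonneg (halfStep_nonneg L M) (layerWeight_nonneg θ w m)))
      (fun m hm => norm_AhOp_mul_AfOp_le f h L M θ w H hφT.2 hG3f hG3h
        ((colNorm_Tdis_le f h L M θ w H hG1f hG1h m).trans (hBT hm.le))
        ((colNorm_TdisHalf_le_cumWeight f h L M θ w H hK.le hG1f hG1h m).trans (hBT hm)))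
      l).trans ?_
    rw [← Finset.mul_sum, ← Finset.mul_sum]
    exact exp_le_exp.2 (mul_le_mul_of_nonneg_left hcW hφ)
  have hread : |Tdis f h L M θ w H L (i₀, Fin.last N) - yv| ≤ B + BT := by
    linarith [abs_sub (Tdis f h L M θ w H L (i₀, Fin.last N)) yv, (abs_apply_le_colNorm _ i₀
      (Fin.last N)).trans ((colNorm_Tdis_le f h L M θ w H hG1f hG1h L).trans (hBT le_rfl))]
  exact (norm_phat_le f h L M θ w H i₀ yv l).trans
    (mul_le_mul hread hback (norm_nonneg _) (by positivity [(colNorm_nonneg H).trans hH]))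

/-- uniform bound on the discrete adjoint vectors. -/
theorem stmt11 (D N q : ℕ) (i₀ : Fin D) (f h : Mat D N → Par q → Mat D N)
    (B K A yv : ℝ) (φT : ℝ → ℝ)
    (hB : 0 < B) (hK : 0 < K) (hA : 0 ≤ A)
    (hφT : Continuous φT ∧ Monotone φT)
    (hfdiffT : ∀ θ : Par q, Differentiable ℝ fun T : Mat D N => f T θ)
    (hhdiffT : ∀ w : Par q, Differentiable ℝ fun T : Mat D N => h T w)
    (hG1f : ∀ (T : Mat D N) (θ : Par q),
      colNorm (f T θ) ≤ K * colNorm T * (1 + ‖θ‖ + ‖θ‖ ^ 2))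
    (hG3f : ∀ (T : Mat D N) (θ : Par q),
      ‖fderiv ℝ (fun T' => f T' θ) T‖ ≤ φT ‖T‖ * (1 + ‖θ‖ + ‖θ‖ ^ 2))
    (hG1h : ∀ (T : Mat D N) (w : Par q),
      colNorm (h T w) ≤ K * colNorm T * (1 + ‖w‖ + ‖w‖ ^ 2))
    (hG3h : ∀ (T : Mat D N) (w : Par q),
      ‖fderiv ℝ (fun T' => h T' w) T‖ ≤ φT ‖T‖ * (1 + ‖w‖ + ‖w‖ ^ 2))
    (L M : ℕ) (hL : 0 < L) (hM : 0 < M)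
    (θ w : ℕ → Fin M → Par q)
    (hparam : (1 / ((M : ℝ) * L)) *
        ∑ l ∈ Finset.range L, ∑ j : Fin M, (‖θ l j‖ ^ 2 + ‖w l j‖ ^ 2) ≤ A ^ 2)
    (H : Mat D N) (hH : colNorm H ≤ B) (hy : |yv| ≤ B) :
    ∀ l < L,
      ‖phat f h i₀ yv L M θ w H l‖ ≤
        (B + B * Real.exp (K * (1 + A + A ^ 2))) *
          Real.exp (φT (Real.sqrt ((N : ℝ) + 1) * (B * Real.exp (K * (1 + A + A ^ 2)))) *
            (1 + A + A ^ 2)) :=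
  stmt11_general D N q i₀ f h B K A yv φT hK hA hφT hG1f hG3f hG1h hG3h L M θ w hparam H hH hy
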